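/- arXiv:2605.12174 — 3 statements merged into one kernel-verified Lean document; each statement's English description precedes it below -/
import Mathlib

section
/- Let μ, ν be probability measures on ℝ^d with finite second moments, and let π be any coupling of μ and ν. Then W₂(π, π*) ≥ (1/√2)·( (∫ ‖x−y‖² dπ(x,y))^{1/2} − W₂(μ,ν) ), where π* is any optimal transport plan between μ and ν for the quadratic cost, and W₂(π, π*) is the 2-Wasserstein distance between π and π* as measures on ℝ^d × ℝ^d. -/
open MeasureTheory ProbabilityTheory Real Filter
open scoped ENNReal

/-- `π` is a coupling of `μ` and `ν`. -/
def IsCoupling {E F : Type*} [MeasurableSpace E] [MeasurableSpace F]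
    (pl : Measure (E × F)) (μ : Measure E) (ν : Measure F) : Prop :=
  pl.map Prod.fst = μ ∧ pl.map Prod.snd = ν

/-- Optimal transport cost for cost function `c`. -/
noncomputable def Wcost {E F : Type*} [MeasurableSpace E] [MeasurableSpace F]
    (c : E → F → ℝ) (μ : Measure E) (ν : Measure F) : ℝ :=
  sInf {r : ℝ | ∃ pl : Measure (E × F), IsProbabilityMeasure pl ∧ IsCoupling pl μ ν ∧
    r = ∫ p, c p.1 p.2 ∂pl}

/-- Squared 2-Wasserstein distance. -/
noncomputable def W2sq {E : Type*} [MeasurableSpace E] [PseudoMetricSpace E]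
    (μ ν : Measure E) : ℝ :=
  Wcost (fun x y => dist x y ^ 2) μ ν

/-- 2-Wasserstein distance. -/
noncomputable def W2 {E : Type*} [MeasurableSpace E] [PseudoMetricSpace E]
    (μ ν : Measure E) : ℝ := Real.sqrt (W2sq μ ν)

/-- Squared 2-Wasserstein distance between measures on a product space,
for the L² product metric `‖(x,y)‖² = ‖x‖² + ‖y‖²`. -/
noncomputable def W2sqProd {E F : Type*} [MeasurableSpace E] [PseudoMetricSpace E]
    [MeasurableSpace F] [PseudoMetricSpace F]
    (pl pl' : Measure (E × F)) : ℝ :=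
  Wcost (fun p q => dist p.1 q.1 ^ 2 + dist p.2 q.2 ^ 2) pl pl'

/-- 2-Wasserstein distance between measures on a product space (L² product metric). -/
noncomputable def W2Prod {E F : Type*} [MeasurableSpace E] [PseudoMetricSpace E]
    [MeasurableSpace F] [PseudoMetricSpace F]
    (pl pl' : Measure (E × F)) : ℝ := Real.sqrt (W2sqProd pl pl')

/-! Let `Q` be any coupling of `π` and `π*`, viewed as the law of `((X, Y), (X', Y'))`.
Pointwise, `d(X, Y) ≤ (d(X, X') + d(Y, Y')) + d(X', Y')`. Minkowski's inequality in `L²(Q)`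
together with `(a + b)² ≤ 2 (a² + b²)` turns this into
`‖d(X, Y)‖₂ ≤ √2 · (cost of Q)^{1/2} + ‖d(X', Y')‖₂`, where the last term is `W₂(μ, ν)` by
optimality of `π*`; the infimum over `Q` gives the bound. -/

section
variable {α : Type*} [MeasurableSpace α] {P : Measure α}

lemma sqrt_integral_sq_eq_toReal_eLpNorm {f : α → ℝ} (hf : MemLp f 2 P) :
    √(∫ x, f x ^ 2 ∂P) = (eLpNorm f 2 P).toReal := by
  rw [hf.eLpNorm_eq_integral_rpow_norm two_ne_zero ENNReal.ofNat_ne_top,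
    ENNReal.toReal_ofReal (by positivity), Real.sqrt_eq_rpow]
  simp [sq_abs]

lemma sqrt_integral_add_sq_le {f g : α → ℝ} (hf : MemLp f 2 P) (hg : MemLp g 2 P) :
    √(∫ x, (f x + g x) ^ 2 ∂P) ≤ √(∫ x, f x ^ 2 ∂P) + √(∫ x, g x ^ 2 ∂P) := by
  rw [sqrt_integral_sq_eq_toReal_eLpNorm hf, sqrt_integral_sq_eq_toReal_eLpNorm hg,
    ← ENNReal.toReal_add hf.eLpNorm_ne_top hg.eLpNorm_ne_top]
  exact (sqrt_integral_sq_eq_toReal_eLpNorm (hf.add hg)).trans_le <|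
    ENNReal.toReal_mono (ENNReal.add_ne_top.2 ⟨hf.eLpNorm_ne_top, hg.eLpNorm_ne_top⟩)
      (eLpNorm_add_le hf.1 hg.1 one_le_two)

lemma sqrt_integral_dist_sq_le {E : Type*} [PseudoMetricSpace E] {X Y X' Y' : α → E}
    (hX : MemLp (fun ω => dist (X ω) (X' ω)) 2 P) (hY : MemLp (fun ω => dist (Y ω) (Y' ω)) 2 P)
    (h' : MemLp (fun ω => dist (X' ω) (Y' ω)) 2 P) :
    √(∫ ω, dist (X ω) (Y ω) ^ 2 ∂P) ≤
      √2 * √(∫ ω, dist (X ω) (X' ω) ^ 2 + dist (Y ω) (Y' ω) ^ 2 ∂P) +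
        √(∫ ω, dist (X' ω) (Y' ω) ^ 2 ∂P) := by
  set u := fun ω => dist (X ω) (X' ω) + dist (Y ω) (Y' ω)
  have hu : MemLp u 2 P := hX.add hY
  have h_triangle : ∀ ω, dist (X ω) (Y ω) ≤ u ω + dist (X' ω) (Y' ω) := fun ω => by
    have := dist_triangle4 (X ω) (X' ω) (Y' ω) (Y ω)
    rw [dist_comm (Y' ω)] at this
    simp only [u]
    linarith
  have h_sq : ∫ ω, u ω ^ 2 ∂P ≤ 2 * ∫ ω, dist (X ω) (X' ω) ^ 2 + dist (Y ω) (Y' ω) ^ 2 ∂P := by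
    rw [← integral_const_mul]
    refine integral_mono hu.integrable_sq
      ((hX.integrable_sq.add hY.integrable_sq).const_mul 2) fun ω => ?_
    nlinarith [sq_nonneg (dist (X ω) (X' ω) - dist (Y ω) (Y' ω))]
  calc √(∫ ω, dist (X ω) (Y ω) ^ 2 ∂P)
      ≤ √(∫ ω, (u ω + dist (X' ω) (Y' ω)) ^ 2 ∂P) := by
        refine Real.sqrt_le_sqrt (integral_mono_of_nonneg (.of_forall fun ω => by positivity)
          (hu.add h').integrable_sq (.of_forall fun ω => ?_))
        exact pow_le_pow_left₀ dist_nonneg (h_triangle ω) 2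
    _ ≤ √(∫ ω, u ω ^ 2 ∂P) + √(∫ ω, dist (X' ω) (Y' ω) ^ 2 ∂P) := sqrt_integral_add_sq_le hu h'
    _ ≤ _ := by
        rw [← Real.sqrt_mul zero_le_two]
        gcongr

lemma memLp_dist {E : Type*} [NormedAddCommGroup E] {X Y : α → E} (hX : MemLp X 2 P)
    (hY : MemLp Y 2 P) : MemLp (fun ω => dist (X ω) (Y ω)) 2 P := by
  simpa only [dist_eq_norm, Pi.sub_apply] using (hX.sub hY).norm

end

lemma IsCoupling.map_comp_fst {E F G : Type*} [MeasurableSpace E] [MeasurableSpace F]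
    [MeasurableSpace G] {Q : Measure (E × F)} {P : Measure E} {P' : Measure F}
    (hQ : IsCoupling Q P P') {f : E → G} (hf : Measurable f) :
    Q.map (fun ω => f ω.1) = P.map f := by
  rw [← hQ.1, Measure.map_map hf measurable_fst]
  rfl

lemma IsCoupling.map_comp_snd {E F G : Type*} [MeasurableSpace E] [MeasurableSpace F]
    [MeasurableSpace G] {Q : Measure (E × F)} {P : Measure E} {P' : Measure F}
    (hQ : IsCoupling Q P P') {f : F → G} (hf : Measurable f) :
    Q.map (fun ω => f ω.2) = P'.map f := by
  rw [← hQ.2, Measure.map_map hf measurable_snd]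
  rfl

lemma isCoupling_prod {E F : Type*} [MeasurableSpace E] [MeasurableSpace F]
    (μ : Measure E) (ν : Measure F) [IsProbabilityMeasure μ] [IsProbabilityMeasure ν] :
    IsCoupling (μ.prod ν) μ ν := by
  simp [IsCoupling]

lemma le_sqrt_Wcost {E F : Type*} [MeasurableSpace E] [MeasurableSpace F]
    {c : E → F → ℝ} {μ : Measure E} {ν : Measure F} [IsProbabilityMeasure μ]
    [IsProbabilityMeasure ν] {a : ℝ} (hc : ∀ p q, 0 ≤ c p q)
    (h : ∀ pl : Measure (E × F), IsProbabilityMeasure pl → IsCoupling pl μ ν →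
      a ≤ √(∫ p, c p.1 p.2 ∂pl)) :
    a ≤ √(Wcost c μ ν) := by
  rcases le_or_gt a 0 with ha | ha
  · exact ha.trans (Real.sqrt_nonneg _)
  refine Real.le_sqrt_of_sq_le (le_csInf ⟨_, μ.prod ν, inferInstance, isCoupling_prod μ ν, rfl⟩ ?_)
  rintro _ ⟨pl, hpl, hcpl, rfl⟩
  exact (Real.le_sqrt ha.le (integral_nonneg fun p => hc _ _)).1 (h pl hpl hcpl)

section
variable {E : Type*} [NormedAddCommGroup E] [MeasurableSpace E] [BorelSpace E]
  [SecondCountableTopology E]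

lemma memLp_two_of_map_eq {Ω : Type*} [MeasurableSpace Ω] {Q : Measure Ω} {T : Ω → E}
    {μ : Measure E} (hT : Measurable T) (hTμ : Q.map T = μ)
    (hμ : Integrable (fun x => ‖x‖ ^ 2) μ) : MemLp T 2 Q := by
  subst hTμ
  exact (memLp_map_measure_iff aestronglyMeasurable_id hT.aemeasurable).1
    ((memLp_two_iff_integrable_sq_norm aestronglyMeasurable_id).2 hμ)

lemma sqrt_integral_dist_sq_le_of_isCoupling {μ ν : Measure E}
    (hμ : Integrable (fun x => ‖x‖ ^ 2) μ) (hν : Integrable (fun x => ‖x‖ ^ 2) ν)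
    {pl pl' : Measure (E × E)} (hpl : IsCoupling pl μ ν) (hpl' : IsCoupling pl' μ ν)
    {Q : Measure ((E × E) × (E × E))} (hQ : IsCoupling Q pl pl') :
    √(∫ p, dist p.1 p.2 ^ 2 ∂pl) ≤
      √2 * √(∫ ω, dist ω.1.1 ω.2.1 ^ 2 + dist ω.1.2 ω.2.2 ^ 2 ∂Q) +
        √(∫ p, dist p.1 p.2 ^ 2 ∂pl') := by
  have hX : MemLp (fun ω => ω.1.1) 2 Q :=
    memLp_two_of_map_eq measurable_fst.fst ((hQ.map_comp_fst measurable_fst).trans hpl.1) hμ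
  have hY : MemLp (fun ω => ω.1.2) 2 Q :=
    memLp_two_of_map_eq measurable_fst.snd ((hQ.map_comp_fst measurable_snd).trans hpl.2) hν
  have hX' : MemLp (fun ω => ω.2.1) 2 Q :=
    memLp_two_of_map_eq measurable_snd.fst ((hQ.map_comp_snd measurable_fst).trans hpl'.1) hμ
  have hY' : MemLp (fun ω => ω.2.2) 2 Q :=
    memLp_two_of_map_eq measurable_snd.snd ((hQ.map_comp_snd measurable_snd).trans hpl'.2) hν
  have h_cost (m : Measure (E × E)) :
      AEStronglyMeasurable (fun p : E × E => dist p.1 p.2 ^ 2) m :=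
    (continuous_dist.pow 2).aestronglyMeasurable
  rw [← hQ.1, ← hQ.2, integral_map measurable_fst.aemeasurable (h_cost _),
    integral_map measurable_snd.aemeasurable (h_cost _)]
  exact sqrt_integral_dist_sq_le (memLp_dist hX hX') (memLp_dist hY hY') (memLp_dist hX' hY')

end

theorem plan_distance_lower_bound_general (d : ℕ)
    (μ ν : Measure (EuclideanSpace ℝ (Fin d)))
    (hμ : Integrable (fun x => ‖x‖ ^ 2) μ) (hν : Integrable (fun x => ‖x‖ ^ 2) ν)
    (pl plstar : Measure (EuclideanSpace ℝ (Fin d) × EuclideanSpace ℝ (Fin d)))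
    [IsProbabilityMeasure pl] [IsProbabilityMeasure plstar]
    (hpl : IsCoupling pl μ ν) (hplstar : IsCoupling plstar μ ν)
    (hopt : ∫ p, dist p.1 p.2 ^ 2 ∂plstar = W2sq μ ν) :
    W2Prod pl plstar ≥
      (1 / Real.sqrt 2) * (Real.sqrt (∫ p, dist p.1 p.2 ^ 2 ∂pl) - W2 μ ν) := by
  rw [W2Prod, W2, ← hopt]
  refine le_sqrt_Wcost (fun _ _ => by positivity) fun Q _ hQ => ?_
  have h := sqrt_integral_dist_sq_le_of_isCoupling hμ hν hpl hplstar hQ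
  rw [one_div, inv_mul_le_iff₀ (by positivity)]
  linarith

/-- Lower bound on the Wasserstein distance between a coupling and an optimal plan
in terms of the excess transport cost. -/
theorem plan_distance_lower_bound (d : ℕ)
    (μ ν : Measure (EuclideanSpace ℝ (Fin d)))
    [IsProbabilityMeasure μ] [IsProbabilityMeasure ν]
    (hμ : Integrable (fun x => ‖x‖ ^ 2) μ) (hν : Integrable (fun x => ‖x‖ ^ 2) ν)
    (pl plstar : Measure (EuclideanSpace ℝ (Fin d) × EuclideanSpace ℝ (Fin d)))
    [IsProbabilityMeasure pl] [IsProbabilityMeasure plstar]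
    (hpl : IsCoupling pl μ ν) (hplstar : IsCoupling plstar μ ν)
    (hopt : ∫ p, dist p.1 p.2 ^ 2 ∂plstar = W2sq μ ν) :
    W2Prod pl plstar ≥
      (1 / Real.sqrt 2) * (Real.sqrt (∫ p, dist p.1 p.2 ^ 2 ∂pl) - W2 μ ν) :=
  plan_distance_lower_bound_general d μ ν hμ hν pl plstar hpl hplstar hopt
end

section
/- Let X ~ N(0, I_d) and Y ~ Uniform{v₁,...,v_M} be independent, with v₁,...,v_M distinct points in ℝ^d, and let Z_t = (1−t)X + tY for t ∈ [0,1). Then 0 ≤ 1 − E[ max_{1≤j≤M} P(Y = v_j | Z_t) ] ≤ (M−1) exp( − t² sep(Y)² / (8(1−t)²) ), where sep(Y) = min_{i≠j} ‖v_i − v_j‖. -/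
open MeasureTheory ProbabilityTheory Real Filter
open scoped ENNReal

/-- Standard Gaussian measure `N(0, I_d)` on `ℝ^d`. -/
noncomputable def stdGaussian (d : ℕ) : Measure (EuclideanSpace ℝ (Fin d)) :=
  (Measure.pi fun _ : Fin d => gaussianReal 0 1).map
    (MeasurableEquiv.toLp 2 (Fin d → ℝ))

/-- Uniform distribution on the atoms `v 0, …, v (M-1)`. -/
noncomputable def unifAtoms {d M : ℕ} (v : Fin M → EuclideanSpace ℝ (Fin d)) :
    Measure (EuclideanSpace ℝ (Fin d)) :=
  (M : ℝ≥0∞)⁻¹ • ∑ j, Measure.dirac (v j)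

/-- Diameter of the atom cloud. -/
noncomputable def atomDiam {d M : ℕ} (v : Fin M → EuclideanSpace ℝ (Fin d)) : ℝ :=
  ⨆ p : Fin M × Fin M, dist (v p.1) (v p.2)

/-- Minimal separation of the atom cloud. -/
noncomputable def atomSep {d M : ℕ} (v : Fin M → EuclideanSpace ℝ (Fin d)) : ℝ :=
  ⨅ p : {p : Fin M × Fin M // p.1 ≠ p.2}, dist (v p.1.1) (v p.1.2)

/-- Joint law of independent `X ~ N(0, I_d)` and `Y ~ Uniform{v_1,…,v_M}`. -/
noncomputable def jointPM {d M : ℕ} (v : Fin M → EuclideanSpace ℝ (Fin d)) :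
    Measure (EuclideanSpace ℝ (Fin d) × EuclideanSpace ℝ (Fin d)) :=
  (stdGaussian d).prod (unifAtoms v)

/-- The interpolation `Z_t = (1−t) X + t Y`. -/
noncomputable def interp {d : ℕ} (t : ℝ)
    (ω : EuclideanSpace ℝ (Fin d) × EuclideanSpace ℝ (Fin d)) :
    EuclideanSpace ℝ (Fin d) := (1 - t) • ω.1 + t • ω.2

/-- The σ-algebra generated by `Z_t`. -/
noncomputable def sigmaZ (d : ℕ) (t : ℝ) :
    MeasurableSpace (EuclideanSpace ℝ (Fin d) × EuclideanSpace ℝ (Fin d)) :=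
  MeasurableSpace.comap (interp t) inferInstance

/-- Posterior probability `P(Y = v_j | Z_t)`, as a conditional expectation (a function
of the sample point). -/
noncomputable def postProb {d M : ℕ} (v : Fin M → EuclideanSpace ℝ (Fin d)) (t : ℝ)
    (j : Fin M) :
    (EuclideanSpace ℝ (Fin d) × EuclideanSpace ℝ (Fin d)) → ℝ :=
  (jointPM v)[Set.indicator {ω : EuclideanSpace ℝ (Fin d) × EuclideanSpace ℝ (Fin d) |
      ω.2 = v j} (fun _ => (1 : ℝ)) | sigmaZ d t]

/-!
For any disjoint `σ(Z_t)`-measurable events `A_j`, the expected maximal posterior is at least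
`∑ j, P(Z_t ∈ A_j, Y = v_j)`: on `A_j` the maximum dominates `P(Y = v_j | Z_t)`, whose integral
over `A_j` is that joint probability. Take for `A_j` the Voronoi cell of `t v_j` among the points
`t v_k`. Given `Y = v_j` we have `Z_t = (1 - t) (X + s v_j)` with `s = t / (1 - t)`, so `Z_t`
leaves the cell only if `‖X + s (v_j - v_k)‖ ≤ ‖X‖` for some `k ≠ j`, i.e. only if
`⟪s (v_k - v_j), X⟫ ≥ s² ‖v_j - v_k‖² / 2`. The sub-Gaussian tail of `⟪w, X⟫` bounds this by
`exp (-s² ‖v_j - v_k‖² / 8) ≤ exp (-t² sep² / (8 (1 - t)²))`, and a union bound over the `M - 1`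
competitors gives the claim.
-/

open scoped NNReal RealInnerProductSpace

section Voronoi

variable {α ι : Type*}

def voronoiCell [Dist α] (c : ι → α) (j : ι) : Set α :=
  {z | ∀ k, k ≠ j → dist z (c j) < dist z (c k)}

open Function in
lemma pairwise_disjoint_voronoiCell [Dist α] (c : ι → α) : Pairwise (Disjoint on voronoiCell c) :=
  fun j k hjk => Set.disjoint_left.2 fun _ hj hk => (hj k hjk.symm).asymm (hk j hjk)

lemma isOpen_voronoiCell [PseudoMetricSpace α] [Finite ι] (c : ι → α) (j : ι) :
    IsOpen (voronoiCell c j) := by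
  have : voronoiCell c j = ⋂ k, ⋂ (_ : k ≠ j), {z | dist z (c j) < dist z (c k)} := by
    ext; simp [voronoiCell]
  rw [this]
  exact isOpen_iInter_of_finite fun k => isOpen_iInter_of_finite fun _ =>
    isOpen_lt (by fun_prop) (by fun_prop)

lemma smul_mem_voronoiCell_smul_iff {𝕜 : Type*} [NormedField 𝕜] [SeminormedAddCommGroup α]
    [NormedSpace 𝕜 α] {a : 𝕜} (ha : a ≠ 0) (c : ι → α) (j : ι) (z : α) :
    a • z ∈ voronoiCell (fun k => a • c k) j ↔ z ∈ voronoiCell c j := by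
  simp only [voronoiCell, Set.mem_ofPred_eq, dist_smul₀]
  exact forall₂_congr fun _ _ => mul_lt_mul_iff_right₀ (norm_pos_iff.2 ha)

end Voronoi

section Gaussian

variable {E : Type*} [NormedAddCommGroup E] [InnerProductSpace ℝ E] [FiniteDimensional ℝ E]
  [MeasurableSpace E] [BorelSpace E]

lemma hasSubgaussianMGF_id_gaussianReal (v : ℝ≥0) : HasSubgaussianMGF id v (gaussianReal 0 v) :=
  ⟨integrable_exp_mul_gaussianReal, fun t => by simp [mgf_id_gaussianReal]⟩

lemma hasSubgaussianMGF_strongDual_stdGaussian (L : StrongDual ℝ E) :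
    HasSubgaussianMGF L (‖L‖₊ ^ 2) (stdGaussian E) := by
  rw [← HasSubgaussianMGF.id_map_iff L.continuous.aemeasurable, IsGaussian.map_eq_gaussianReal,
    integral_strongDual_stdGaussian, variance_dual_stdGaussian]
  convert hasSubgaussianMGF_id_gaussianReal _
  ext; simp

lemma stdGaussian_real_norm_add_le_norm_le (w : E) :
    (stdGaussian E).real {x | ‖x + w‖ ≤ ‖x‖} ≤ exp (-‖w‖ ^ 2 / 8) := by
  have hset : {x | ‖x + w‖ ≤ ‖x‖} = {x | ‖w‖ ^ 2 / 2 ≤ innerSL ℝ (-w) x} := by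
    ext x
    simp only [Set.mem_ofPred_eq, innerSL_apply_apply, inner_neg_left]
    rw [← sq_le_sq₀ (norm_nonneg _) (norm_nonneg _), norm_add_sq_real, real_inner_comm]
    constructor <;> intro h <;> linarith
  rw [hset]
  refine ((hasSubgaussianMGF_strongDual_stdGaussian _).measure_ge_le (by positivity)).trans_eq ?_
  congr 1
  simp only [NNReal.coe_pow, coe_nnnorm, innerSL_apply_norm, norm_neg]
  rcases eq_or_ne ‖w‖ 0 with h | h
  · simp [h]
  · field_simp; ring

lemma one_sub_mul_exp_le_stdGaussian_real_voronoiCell {ι : Type*} [Fintype ι] (c : ι → E)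
    (j : ι) {r : ℝ} (hsep : ∀ k, k ≠ j → r ≤ dist (c j) (c k)) (hr : 0 ≤ r) :
    1 - (Fintype.card ι - 1) * exp (-r ^ 2 / 8) ≤
      (stdGaussian E).real {x | x + c j ∈ voronoiCell c j} := by
  classical
  set γ := stdGaussian E
  have hmeas : MeasurableSet {x | x + c j ∈ voronoiCell c j} :=
    ((isOpen_voronoiCell c j).preimage (by fun_prop)).measurableSet
  have hcompl : {x | x + c j ∈ voronoiCell c j}ᶜ ⊆
      ⋃ k ∈ Finset.univ.erase j, {x | ‖x + (c j - c k)‖ ≤ ‖x‖} := by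
    intro x hx
    simp only [voronoiCell, Set.mem_compl_iff, Set.mem_ofPred_eq, not_forall, not_lt] at hx
    obtain ⟨k, hkj, hk⟩ := hx
    simp only [Set.mem_iUnion, Finset.mem_erase, Finset.mem_univ, and_true]
    refine ⟨k, hkj, ?_⟩
    simpa [dist_eq_norm, add_sub_assoc] using hk
  have htail : ∀ k ∈ Finset.univ.erase j,
      γ.real {x | ‖x + (c j - c k)‖ ≤ ‖x‖} ≤ exp (-r ^ 2 / 8) := fun k hk =>
    (stdGaussian_real_norm_add_le_norm_le _).trans <| exp_le_exp.2 <| by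
      have := hsep k (Finset.ne_of_mem_erase hk)
      rw [← dist_eq_norm]
      gcongr
  have hcard : ((Finset.univ.erase j).card : ℝ) = Fintype.card ι - 1 := by
    rw [Finset.card_erase_of_mem (Finset.mem_univ j), Finset.card_univ,
      Nat.cast_sub (Fintype.card_pos_iff.2 ⟨j⟩), Nat.cast_one]
  calc 1 - (Fintype.card ι - 1) * exp (-r ^ 2 / 8)
      ≤ 1 - ∑ k ∈ Finset.univ.erase j, γ.real {x | ‖x + (c j - c k)‖ ≤ ‖x‖} := by
        have := Finset.sum_le_card_nsmul _ _ _ htail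
        rw [nsmul_eq_mul, hcard] at this
        linarith
    _ ≤ 1 - γ.real {x | x + c j ∈ voronoiCell c j}ᶜ := by
        gcongr
        exact (measureReal_mono hcompl (measure_ne_top _ _)).trans
          (measureReal_biUnion_finset_le _ _)
    _ = γ.real {x | x + c j ∈ voronoiCell c j} := by
        rw [measureReal_compl hmeas, probReal_univ]; ring

end Gaussian

section MaxPosterior

variable {Ω ι : Type*} {m mΩ : MeasurableSpace Ω} {μ : Measure Ω} [Fintype ι] (T : ι → Set Ω)

lemma ae_iSup_condExp_indicator_mem_Icc [IsFiniteMeasure μ] :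
    ∀ᵐ ω ∂μ, ⨆ j, μ[(T j).indicator (fun _ => (1 : ℝ)) | m] ω ∈ Set.Icc 0 1 := by
  have hbdd : ∀ j, ∀ᵐ ω ∂μ, |μ[(T j).indicator (fun _ => (1 : ℝ)) | m] ω| ≤ 1 := fun j =>
    ae_bdd_abs_condExp_of_ae_bdd_abs (.of_forall fun ω => by
      by_cases h : ω ∈ T j <;> simp [h])
  have hnonneg : ∀ j, 0 ≤ᵐ[μ] μ[(T j).indicator (fun _ => (1 : ℝ)) | m] := fun j =>
    condExp_nonneg (.of_forall fun ω => Set.indicator_nonneg (fun _ _ => zero_le_one) ω)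
  filter_upwards [ae_all_iff.2 hbdd, ae_all_iff.2 hnonneg] with ω hle h0
  exact ⟨Real.iSup_nonneg h0, Real.iSup_le (fun j => (le_abs_self _).trans (hle j)) zero_le_one⟩

lemma integrable_iSup_condExp_indicator [IsFiniteMeasure μ] :
    Integrable (fun ω => ⨆ j, μ[(T j).indicator (fun _ => (1 : ℝ)) | m] ω) μ := by
  refine .of_bound
    (AEMeasurable.iSup fun j => integrable_condExp.aemeasurable).aestronglyMeasurable 1 ?_
  filter_upwards [ae_iSup_condExp_indicator_mem_Icc T] with ω hω
  rw [Real.norm_of_nonneg hω.1]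
  exact hω.2

lemma integral_iSup_condExp_indicator_le_one [IsProbabilityMeasure μ] :
    ∫ ω, ⨆ j, μ[(T j).indicator (fun _ => (1 : ℝ)) | m] ω ∂μ ≤ 1 := by
  calc _ ≤ ∫ _, (1 : ℝ) ∂μ := integral_mono_ae (integrable_iSup_condExp_indicator T)
        (integrable_const 1) ((ae_iSup_condExp_indicator_mem_Icc T).mono fun _ hω => hω.2)
    _ = 1 := by simp

open Function in
lemma sum_measureReal_inter_le_integral_iSup_condExp_indicator [IsFiniteMeasure μ]
    (hm : m ≤ mΩ) (hT : ∀ j, MeasurableSet (T j)) {S : ι → Set Ω}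
    (hS : ∀ j, MeasurableSet[m] (S j)) (hdisj : Pairwise (Disjoint on S)) :
    ∑ j, μ.real (S j ∩ T j) ≤ ∫ ω, ⨆ j, μ[(T j).indicator (fun _ => (1 : ℝ)) | m] ω ∂μ := by
  set p := fun j => μ[(T j).indicator (fun _ => (1 : ℝ)) | m]
  have hF := integrable_iSup_condExp_indicator (μ := μ) (m := m) T
  have hp_le : ∀ j ω, p j ω ≤ ⨆ k, p k ω := fun j ω =>
    le_ciSup (f := fun k => p k ω) (Set.finite_range _).bddAbove j
  calc ∑ j, μ.real (S j ∩ T j) = ∑ j, ∫ ω in S j, p j ω ∂μ := by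
        refine Finset.sum_congr rfl fun j _ => ?_
        rw [setIntegral_condExp hm ((integrable_const 1).indicator (hT j)) (hS j),
          setIntegral_indicator (hT j), setIntegral_const, smul_eq_mul, mul_one, Measure.real]
    _ ≤ ∑ j, ∫ ω in S j, ⨆ k, p k ω ∂μ := Finset.sum_le_sum fun j _ =>
        setIntegral_mono integrable_condExp.integrableOn hF.integrableOn (hp_le j)
    _ = ∫ ω in ⋃ j, S j, ⨆ k, p k ω ∂μ :=
        (integral_iUnion_fintype (fun j => hm _ (hS j)) hdisj fun _ => hF.integrableOn).symm
    _ ≤ ∫ ω, ⨆ k, p k ω ∂μ :=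
        setIntegral_le_integral hF ((ae_iSup_condExp_indicator_mem_Icc T).mono fun ω hω => hω.1)

end MaxPosterior

lemma stdGaussian_eq (d : ℕ) :
    _root_.stdGaussian d = ProbabilityTheory.stdGaussian (EuclideanSpace ℝ (Fin d)) :=
  map_pi_eq_stdGaussian

instance (d : ℕ) : IsProbabilityMeasure (_root_.stdGaussian d) :=
  stdGaussian_eq d ▸ inferInstance

lemma unifAtoms_singleton {d M : ℕ} {v : Fin M → EuclideanSpace ℝ (Fin d)}
    (hv : Function.Injective v) (j : Fin M) :
    unifAtoms v {v j} = (M : ℝ≥0∞)⁻¹ := by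
  rw [unifAtoms, Measure.smul_apply, Measure.finsetSum_apply, Finset.sum_eq_single j]
  · simp
  · intro k _ hkj
    simp [hv.ne hkj]
  · simp

instance {d M : ℕ} [NeZero M] (v : Fin M → EuclideanSpace ℝ (Fin d)) :
    IsProbabilityMeasure (unifAtoms v) := by
  constructor
  simp [unifAtoms, ENNReal.inv_mul_cancel (NeZero.ne (M : ℝ≥0∞))]

lemma jointPM_inter_snd_eq {d M : ℕ} {v : Fin M → EuclideanSpace ℝ (Fin d)}
    (hv : Function.Injective v) (j : Fin M) {W : Set _} (hW : MeasurableSet W) :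
    jointPM v (W ∩ {ω | ω.2 = v j}) =
      (M : ℝ≥0∞)⁻¹ * _root_.stdGaussian d {x | (x, v j) ∈ W} := by
  have : SFinite (unifAtoms v) := by unfold unifAtoms; infer_instance
  have hprod : {ω : EuclideanSpace ℝ (Fin d) × EuclideanSpace ℝ (Fin d) | ω.2 = v j} =
      Set.univ ×ˢ {v j} := by
    ext; simp
  rw [← Measure.restrict_apply hW, hprod, jointPM, ← Measure.prod_restrict, Measure.restrict_univ,
    Measure.restrict_singleton, unifAtoms_singleton hv, Measure.prod_smul_right, Measure.prod_dirac,
    Measure.smul_apply, Measure.map_apply (by fun_prop) hW, smul_eq_mul]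
  rfl

instance {d M : ℕ} [NeZero M] (v : Fin M → EuclideanSpace ℝ (Fin d)) :
    IsProbabilityMeasure (jointPM v) := by
  unfold jointPM; infer_instance

lemma measurable_interp {d : ℕ} (t : ℝ) : Measurable (interp (d := d) t) := by
  unfold interp; fun_prop

lemma atomSep_nonneg {d M : ℕ} (v : Fin M → EuclideanSpace ℝ (Fin d)) : 0 ≤ atomSep v :=
  Real.iInf_nonneg fun _ => dist_nonneg

lemma atomSep_le_dist {d M : ℕ} (v : Fin M → EuclideanSpace ℝ (Fin d)) {j k : Fin M}
    (hjk : j ≠ k) : atomSep v ≤ dist (v j) (v k) :=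
  ciInf_le ⟨0, by rintro _ ⟨_, rfl⟩; exact dist_nonneg⟩
    (⟨(j, k), hjk⟩ : {p : Fin M × Fin M // p.1 ≠ p.2})

lemma interp_mk_mem_voronoiCell_iff {d M : ℕ} (v : Fin M → EuclideanSpace ℝ (Fin d)) {t : ℝ}
    (ht : t < 1) (x : EuclideanSpace ℝ (Fin d)) (j : Fin M) :
    interp t (x, v j) ∈ voronoiCell (fun k => t • v k) j ↔
      x + (t / (1 - t)) • v j ∈ voronoiCell (fun k => (t / (1 - t)) • v k) j := by
  have h : 1 - t ≠ 0 := by linarith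
  have hst : (1 - t) * (t / (1 - t)) = t := by field_simp
  rw [← smul_mem_voronoiCell_smul_iff h _ _ (x + _)]
  simp only [interp, smul_add, smul_smul, hst]

lemma le_jointPM_real_voronoiCell_inter {d M : ℕ} [NeZero M]
    {v : Fin M → EuclideanSpace ℝ (Fin d)} (hv : Function.Injective v) {t : ℝ}
    (ht : t ∈ Set.Ico (0 : ℝ) 1) (j : Fin M) :
    (M : ℝ)⁻¹ * (1 - ((M : ℝ) - 1) * exp (-(t ^ 2 * atomSep v ^ 2) / (8 * (1 - t) ^ 2))) ≤
      (jointPM v).real (interp t ⁻¹' voronoiCell (fun k => t • v k) j ∩ {ω | ω.2 = v j}) := by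
  obtain ⟨ht0, ht1⟩ := ht
  set s := t / (1 - t)
  have hs : 0 ≤ s := div_nonneg ht0 (by linarith)
  have hsep : ∀ k, k ≠ j → s * atomSep v ≤ dist (s • v j) (s • v k) := fun k hkj => by
    rw [dist_smul₀, Real.norm_of_nonneg hs]
    exact mul_le_mul_of_nonneg_left (atomSep_le_dist v hkj.symm) hs
  have hE : exp (-(s * atomSep v) ^ 2 / 8) =
      exp (-(t ^ 2 * atomSep v ^ 2) / (8 * (1 - t) ^ 2)) := by
    congr 1; simp only [s]; field_simp
  have hcell := one_sub_mul_exp_le_stdGaussian_real_voronoiCell (fun k => s • v k) j hsep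
    (mul_nonneg hs (atomSep_nonneg v))
  rw [Fintype.card_fin, hE, ← stdGaussian_eq] at hcell
  rw [measureReal_def,
    jointPM_inter_snd_eq hv j ((measurable_interp t) (isOpen_voronoiCell _ j).measurableSet),
    ENNReal.toReal_mul, ENNReal.toReal_inv, ENNReal.toReal_natCast]
  refine mul_le_mul_of_nonneg_left (hcell.trans_eq ?_) (by positivity)
  simp only [Set.mem_preimage, interp_mk_mem_voronoiCell_iff v ht1]
  rfl

/-- Posterior concentration for the independent coupling: the expected maximal posterior
weight converges to one at rate `(M−1) exp(−t² sep(𝒴)² / (8(1−t)²))`. -/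
theorem posterior_concentration (d M : ℕ) (hM : 1 ≤ M)
    (v : Fin M → EuclideanSpace ℝ (Fin d)) (hv : Function.Injective v)
    (t : ℝ) (ht : t ∈ Set.Ico (0 : ℝ) 1) :
    0 ≤ 1 - ∫ ω, (⨆ j, postProb v t j ω) ∂(jointPM v) ∧
    1 - ∫ ω, (⨆ j, postProb v t j ω) ∂(jointPM v) ≤
      ((M : ℝ) - 1) * Real.exp (-(t ^ 2 * atomSep v ^ 2) / (8 * (1 - t) ^ 2)) := by
  have : NeZero M := ⟨by omega⟩
  refine ⟨sub_nonneg.2 (integral_iSup_condExp_indicator_le_one _), ?_⟩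
  have hdecision := sum_measureReal_inter_le_integral_iSup_condExp_indicator
    (μ := jointPM v) _ (measurable_interp t).comap_le
    (fun j => measurable_snd (measurableSet_singleton (v j)))
    (S := fun j => interp t ⁻¹' voronoiCell (fun k => t • v k) j)
    (fun j => ⟨_, (isOpen_voronoiCell _ j).measurableSet, rfl⟩)
    fun j k hjk => (pairwise_disjoint_voronoiCell _ hjk).preimage _
  have hcells := Finset.sum_le_sum fun j (_ : j ∈ Finset.univ) =>
    le_jointPM_real_voronoiCell_inter hv ht j
  rw [Finset.sum_const, Finset.card_univ, Fintype.card_fin, nsmul_eq_mul,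
    mul_inv_cancel_left₀ (NeZero.ne (M : ℝ))] at hcells
  exact sub_le_comm.1 (hcells.trans hdecision)
end

section
/- Let μ have compact support in ℝ^d with R = max_j sup_{x ∈ supp(μ)} ‖x − v_j‖², let the empirical target weights satisfy q̂_j ≥ 1/(2M) for all j with ∑_j q̂_j = 1, and let H_k(λ) = ∫ ψ_λ dμ̂ + ∑_j q̂_j λ_j be the empirical semidiscrete dual objective, where ψ_λ(x) = min_j(‖x − v_j‖² − λ_j), restricted to Λ = {λ ∈ ℝ^M : ∑_j λ_j = 0}. Then any λ ∈ Λ with H_k(λ) ≥ H_k(0) satisfies max_j λ_j ≤ 2R and min_j λ_j ≥ −2(M−1)R; in particular, H_k attains its maximum on Λ and every maximizer lies in the compact set Λ ∩ [−2(M−1)R, 2R]^M. -/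
open MeasureTheory ProbabilityTheory Real

/-!
Improving on `λ = 0` forces `λ` into a box. Bounding `ψ_λ ≤ ‖x - v_{j₀}‖² - λ_{j₀} ≤ R` at an
index `j₀` where `λ` is maximal, and writing `∑ q̂_j λ_j = λ_{j₀} + ∑ q̂_j (λ_j - λ_{j₀})` with
every `λ_j - λ_{j₀} ≤ 0` and `q̂_j ≥ 1/(2M)`, the constraint `∑ λ_j = 0` gives
`H(λ) ≤ R - λ_{j₀}/2`, while `H(0) ≥ 0`. So `max λ ≤ 2R`, and then `∑ λ_j = 0` bounds `min λ`
from below. Since `λ ↦ ∫ ψ_λ dμ̂` is 1-Lipschitz for the sup norm, `H` is continuous, and its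
maximum over the box is a maximum over all of `Λ`.
-/

theorem IsCompact.exists_forall_le_of_superlevel_subset {α β : Type*} [TopologicalSpace α]
    [LinearOrder β] [TopologicalSpace β] [ClosedIciTopology β] {K s : Set α} {f : α → β}
    {x₀ : α} (hK : IsCompact K) (hf : ContinuousOn f K) (hx₀ : x₀ ∈ K)
    (hsK : {y ∈ s | f x₀ ≤ f y} ⊆ K) : ∃ x ∈ K, ∀ y ∈ s, f y ≤ f x := by
  obtain ⟨x, hxK, hmax⟩ := hK.exists_isMaxOn ⟨x₀, hx₀⟩ hf
  refine ⟨x, hxK, fun y hy => ?_⟩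
  rcases le_or_gt (f x₀) (f y) with hle | hlt
  · exact hmax (hsK ⟨hy, hle⟩)
  · exact hlt.le.trans (hmax hx₀)

namespace Finset

variable {ι : Type*} [Fintype ι]

theorem sum_mul_le_of_le_of_sum_eq_zero {q lam : ι → ℝ} {ε : ℝ} {j₀ : ι} (hq : ∀ j, ε ≤ q j)
    (hqsum : ∑ j, q j = 1) (hsum : ∑ j, lam j = 0) (hmax : ∀ j, lam j ≤ lam j₀) :
    ∑ j, q j * lam j ≤ (1 - Fintype.card ι * ε) * lam j₀ :=
  calc ∑ j, q j * lam j = lam j₀ + ∑ j, q j * (lam j - lam j₀) := by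
        simp only [mul_sub, sum_sub_distrib, ← sum_mul, hqsum, one_mul, add_sub_cancel]
    _ ≤ lam j₀ + ∑ j, ε * (lam j - lam j₀) := add_le_add_right
        (sum_le_sum fun j _ => mul_le_mul_of_nonpos_right (hq j) (sub_nonpos.2 (hmax j))) _
    _ = (1 - Fintype.card ι * ε) * lam j₀ := by
        simp only [← mul_sum, sum_sub_distrib, hsum, sum_const, card_univ, nsmul_eq_mul]
        ring

theorem neg_card_sub_one_mul_le_of_sum_eq_zero {lam : ι → ℝ} {B : ℝ} (hsum : ∑ j, lam j = 0)
    (hB : ∀ j, lam j ≤ B) (j : ι) : -((Fintype.card ι - 1) * B) ≤ lam j := by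
  have hgap : B - lam j ≤ ∑ i, (B - lam i) :=
    single_le_sum (fun i _ => sub_nonneg.2 (hB i)) (mem_univ j)
  rw [sum_sub_distrib, hsum, sum_const, card_univ, nsmul_eq_mul] at hgap
  linarith

end Finset

namespace SemidiscreteOT

variable {ι X : Type*} [Fintype ι]

noncomputable def cTransform (c : ι → X → ℝ) (lam : ι → ℝ) (x : X) : ℝ :=
  ⨅ j, (c j x - lam j)

noncomputable def semidualObjective [MeasurableSpace X] (μ : Measure X) (c : ι → X → ℝ)
    (q : ι → ℝ) (lam : ι → ℝ) : ℝ :=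
  (∫ x, cTransform c lam x ∂μ) + ∑ j, q j * lam j

variable (c : ι → X → ℝ)

theorem cTransform_le (lam : ι → ℝ) (x : X) (j : ι) : cTransform c lam x ≤ c j x - lam j :=
  ciInf_le (Set.finite_range _).bddBelow j

variable [Nonempty ι]

theorem cTransform_le_add_dist (a b : ι → ℝ) (x : X) :
    cTransform c a x ≤ cTransform c b x + dist a b := by
  refine sub_le_iff_le_add.1 (le_ciInf fun j => ?_)
  have hab : b j - a j ≤ dist a b :=
    (le_abs_self _).trans ((abs_sub_comm _ _).trans_le (dist_le_pi_dist a b j))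
  linarith [cTransform_le c a x j]

theorem cTransform_eq_inf' (lam : ι → ℝ) :
    cTransform c lam = Finset.univ.inf' Finset.univ_nonempty fun j => c j - fun _ => lam j := by
  ext x
  rw [Finset.inf'_apply, Finset.inf'_univ_eq_ciInf]
  rfl

variable [MeasurableSpace X] {μ : Measure X} {c}

theorem integrable_cTransform [IsFiniteMeasure μ] (hc : ∀ j, Integrable (c j) μ)
    (lam : ι → ℝ) : Integrable (cTransform c lam) μ := by
  rw [cTransform_eq_inf']
  exact Finset.inf'_induction (p := fun f => Integrable f μ) _ _ (fun _ h₁ _ h₂ => h₁.inf h₂)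
    fun j _ => (hc j).sub (integrable_const _)

theorem semidualObjective_zero_nonneg (hc₀ : ∀ j x, 0 ≤ c j x) (q : ι → ℝ) :
    0 ≤ semidualObjective μ c q 0 := by
  simp only [semidualObjective, Pi.zero_apply, mul_zero, Finset.sum_const_zero, add_zero]
  exact integral_nonneg fun x => le_ciInf fun j => by simpa using hc₀ j x

variable [IsProbabilityMeasure μ]

theorem lipschitzWith_integral_cTransform (hc : ∀ j, Integrable (c j) μ) :
    LipschitzWith 1 fun lam => ∫ x, cTransform c lam x ∂μ := by
  refine LipschitzWith.of_le_add fun a b => ?_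
  calc ∫ x, cTransform c a x ∂μ ≤ ∫ x, (cTransform c b x + dist a b) ∂μ :=
        integral_mono (integrable_cTransform hc a)
          ((integrable_cTransform hc b).add (integrable_const _))
          (cTransform_le_add_dist c a b)
    _ = ∫ x, cTransform c b x ∂μ + dist a b := by
        rw [integral_add (integrable_cTransform hc b) (integrable_const _), integral_const]
        simp

theorem continuous_semidualObjective (hc : ∀ j, Integrable (c j) μ) (q : ι → ℝ) :
    Continuous (semidualObjective μ c q) :=
  (lipschitzWith_integral_cTransform hc).continuous.add (by fun_prop)

theorem integral_cTransform_le {R : ℝ} (hc : ∀ j, Integrable (c j) μ)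
    (hcR : ∀ᵐ x ∂μ, ∀ j, c j x ≤ R) (lam : ι → ℝ) (j : ι) :
    ∫ x, cTransform c lam x ∂μ ≤ R - lam j :=
  calc ∫ x, cTransform c lam x ∂μ ≤ ∫ _, (R - lam j) ∂μ :=
        integral_mono_ae (integrable_cTransform hc lam) (integrable_const _)
          (hcR.mono fun x hx => (cTransform_le c lam x j).trans (by linarith [hx j]))
    _ = R - lam j := by simp

variable {R : ℝ} {q : ι → ℝ}

theorem semidualObjective_le_of_sum_eq_zero (hc : ∀ j, Integrable (c j) μ)
    (hcR : ∀ᵐ x ∂μ, ∀ j, c j x ≤ R) (hq : ∀ j, 1 / (2 * (Fintype.card ι : ℝ)) ≤ q j)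
    (hqsum : ∑ j, q j = 1) {lam : ι → ℝ} (hsum : ∑ j, lam j = 0) {j₀ : ι}
    (hmax : ∀ j, lam j ≤ lam j₀) : semidualObjective μ c q lam ≤ R - lam j₀ / 2 := by
  have hlin := Finset.sum_mul_le_of_le_of_sum_eq_zero hq hqsum hsum hmax
  have hhalf : 1 - Fintype.card ι * (1 / (2 * (Fintype.card ι : ℝ))) = 1 / 2 := by
    field_simp [(Fintype.card_pos (α := ι)).ne']
    ring
  rw [hhalf] at hlin
  rw [semidualObjective]
  linarith [integral_cTransform_le hc hcR lam j₀]

theorem le_two_mul_of_semidualObjective_zero_le (hc₀ : ∀ j x, 0 ≤ c j x)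
    (hc : ∀ j, Integrable (c j) μ) (hcR : ∀ᵐ x ∂μ, ∀ j, c j x ≤ R)
    (hq : ∀ j, 1 / (2 * (Fintype.card ι : ℝ)) ≤ q j) (hqsum : ∑ j, q j = 1)
    {lam : ι → ℝ} (hsum : ∑ j, lam j = 0)
    (himp : semidualObjective μ c q 0 ≤ semidualObjective μ c q lam) (j : ι) :
    lam j ≤ 2 * R := by
  obtain ⟨j₀, -, hj₀⟩ := Finset.exists_max_image Finset.univ lam Finset.univ_nonempty
  have hmax : ∀ i, lam i ≤ lam j₀ := fun i => hj₀ i (Finset.mem_univ i)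
  linarith [hmax j, semidualObjective_zero_nonneg (μ := μ) hc₀ q,
    semidualObjective_le_of_sum_eq_zero hc hcR hq hqsum hsum hmax]

theorem bounds_of_semidualObjective_zero_le (hc₀ : ∀ j x, 0 ≤ c j x)
    (hc : ∀ j, Integrable (c j) μ) (hcR : ∀ᵐ x ∂μ, ∀ j, c j x ≤ R)
    (hq : ∀ j, 1 / (2 * (Fintype.card ι : ℝ)) ≤ q j) (hqsum : ∑ j, q j = 1)
    {lam : ι → ℝ} (hsum : ∑ j, lam j = 0)
    (himp : semidualObjective μ c q 0 ≤ semidualObjective μ c q lam) :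
    (∀ j, lam j ≤ 2 * R) ∧ ∀ j, -(2 * ((Fintype.card ι : ℝ) - 1) * R) ≤ lam j := by
  have hub := le_two_mul_of_semidualObjective_zero_le hc₀ hc hcR hq hqsum hsum himp
  refine ⟨hub, fun j => ?_⟩
  linarith [Finset.neg_card_sub_one_mul_le_of_sum_eq_zero hsum hub j]

end SemidiscreteOT

theorem empirical_dual_compact_maximizers_general (d M : ℕ)
    (v : Fin M → EuclideanSpace ℝ (Fin d))
    (S : Set (EuclideanSpace ℝ (Fin d)))
    (μhat : Measure (EuclideanSpace ℝ (Fin d))) [IsProbabilityMeasure μhat]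
    (hsupp : μhat Sᶜ = 0)
    (R : ℝ) (hR : ∀ j, ∀ x ∈ S, ‖x - v j‖ ^ 2 ≤ R)
    (qhat : Fin M → ℝ) (hq : ∀ j, 1 / (2 * (M : ℝ)) ≤ qhat j) (hqsum : ∑ j, qhat j = 1)
    (H : (Fin M → ℝ) → ℝ)
    (hH : ∀ lam, H lam =
      (∫ x, (⨅ j, (‖x - v j‖ ^ 2 - lam j)) ∂μhat) + ∑ j, qhat j * lam j) :
    (∀ lam : Fin M → ℝ, ∑ j, lam j = 0 → H 0 ≤ H lam →
      (∀ j, lam j ≤ 2 * R) ∧ ∀ j, -(2 * ((M : ℝ) - 1) * R) ≤ lam j) ∧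
    ∃ lam0 : Fin M → ℝ, (∑ j, lam0 j = 0) ∧
      (∀ j, lam0 j ≤ 2 * R ∧ -(2 * ((M : ℝ) - 1) * R) ≤ lam0 j) ∧
      ∀ lam : Fin M → ℝ, ∑ j, lam j = 0 → H lam ≤ H lam0 := by
  have hM : 0 < M := Nat.pos_of_ne_zero fun h => by subst h; simp at hqsum
  have : Nonempty (Fin M) := ⟨⟨0, hM⟩⟩
  set c : Fin M → EuclideanSpace ℝ (Fin d) → ℝ := fun j x => ‖x - v j‖ ^ 2
  obtain rfl : H = SemidiscreteOT.semidualObjective μhat c qhat := funext hH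
  have hcR : ∀ᵐ x ∂μhat, ∀ j, c j x ≤ R :=
    Filter.mem_of_superset (mem_ae_iff.2 hsupp) fun x hx j => hR j x hx
  have hc : ∀ j, Integrable (c j) μhat := fun j =>
    Integrable.of_bound (by fun_prop) R (hcR.mono fun x hx => by simpa [c] using hx j)
  have hq' : ∀ j, 1 / (2 * (Fintype.card (Fin M) : ℝ)) ≤ qhat j := by simpa using hq
  have hbox : ∀ lam : Fin M → ℝ, ∑ j, lam j = 0 →
      SemidiscreteOT.semidualObjective μhat c qhat 0 ≤
        SemidiscreteOT.semidualObjective μhat c qhat lam →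
      (∀ j, lam j ≤ 2 * R) ∧ ∀ j, -(2 * ((M : ℝ) - 1) * R) ≤ lam j := fun lam hsum himp => by
    simpa only [Fintype.card_fin] using SemidiscreteOT.bounds_of_semidualObjective_zero_le
      (fun _ _ => by positivity) hc hcR hq' hqsum hsum himp
  have hR₀ : 0 ≤ R := by
    obtain ⟨x, hx⟩ := hcR.exists
    exact (sq_nonneg _).trans (hx ⟨0, hM⟩)
  set K := {lam : Fin M → ℝ | ∑ j, lam j = 0} ∩
    Set.univ.pi fun _ => Set.Icc (-(2 * ((M : ℝ) - 1) * R)) (2 * R)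
  have hK : IsCompact K := (isCompact_univ_pi fun _ => isCompact_Icc).inter_left
    (isClosed_eq (by fun_prop) (by fun_prop))
  have h0K : (0 : Fin M → ℝ) ∈ K := by
    have : (1 : ℝ) ≤ M := by exact_mod_cast hM
    refine ⟨by simp, fun j _ => ⟨by simp; nlinarith, by simp; linarith⟩⟩
  obtain ⟨lam0, ⟨hsum0, hbox0⟩, hmax⟩ := hK.exists_forall_le_of_superlevel_subset
    (SemidiscreteOT.continuous_semidualObjective hc qhat).continuousOn h0K
    fun lam ⟨hsum, himp⟩ =>
      ⟨hsum, fun j _ => ⟨(hbox lam hsum himp).2 j, (hbox lam hsum himp).1 j⟩⟩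
  exact ⟨hbox, lam0, hsum0, fun j => ⟨(hbox0 j trivial).2, (hbox0 j trivial).1⟩, hmax⟩

/-- Compactness of empirical maximizers of the semidiscrete dual objective: on the event
where all empirical target weights are at least `1/(2M)`, any `λ` with `∑ λ_j = 0` that
improves on `λ = 0` satisfies `max_j λ_j ≤ 2R` and `min_j λ_j ≥ −2(M−1)R`; consequently
the empirical dual objective attains its maximum on `Λ`, at a point in this box. -/
theorem empirical_dual_compact_maximizers (d M : ℕ) (hM : 0 < M)
    (v : Fin M → EuclideanSpace ℝ (Fin d))
    (S : Set (EuclideanSpace ℝ (Fin d))) (hS : IsCompact S)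
    (μhat : Measure (EuclideanSpace ℝ (Fin d))) [IsProbabilityMeasure μhat]
    (hsupp : μhat Sᶜ = 0)
    (R : ℝ) (hR : ∀ j, ∀ x ∈ S, ‖x - v j‖ ^ 2 ≤ R)
    (qhat : Fin M → ℝ) (hq : ∀ j, 1 / (2 * (M : ℝ)) ≤ qhat j) (hqsum : ∑ j, qhat j = 1)
    (H : (Fin M → ℝ) → ℝ)
    (hH : ∀ lam, H lam =
      (∫ x, (⨅ j, (‖x - v j‖ ^ 2 - lam j)) ∂μhat) + ∑ j, qhat j * lam j) :
    (∀ lam : Fin M → ℝ, ∑ j, lam j = 0 → H 0 ≤ H lam →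
      (∀ j, lam j ≤ 2 * R) ∧ ∀ j, -(2 * ((M : ℝ) - 1) * R) ≤ lam j) ∧
    ∃ lam0 : Fin M → ℝ, (∑ j, lam0 j = 0) ∧
      (∀ j, lam0 j ≤ 2 * R ∧ -(2 * ((M : ℝ) - 1) * R) ≤ lam0 j) ∧
      ∀ lam : Fin M → ℝ, ∑ j, lam j = 0 → H lam ≤ H lam0 :=
  empirical_dual_compact_maximizers_general d M v S μhat hsupp R hR qhat hq hqsum H hH
end
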